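/- Let h(l,u) := (K − e^u) − (K − e^l) Z(u−l) + λ∫_0^{u−l}(K − e^{u−y}) W(y) dy, where Z(x) = e^{Φx}(1 + λ∫_0^x e^{−Φz} W(z) dz), W is continuous, nonnegative, nondecreasing on [0,∞), Φ < 0, K > 0, λ > 0. Suppose u < log(−KΦ/(1−Φ)) (equivalently e^u(1−Φ) < −KΦ). Then h(l,u) > 0 for all l < u; in particular there is no l < u with h(l,u) = 0. -/

import Mathlib

open MeasureTheory

/-- `Z(x) = e^{Φx}(1 + λ ∫_0^x e^{−Φz} W(z) dz)`. -/
noncomputable def Zh (W : ℝ → ℝ) (lam Φ x : ℝ) : ℝ :=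
  Real.exp (Φ * x) * (1 + lam * ∫ z in (0 : ℝ)..x, Real.exp (-Φ * z) * W z)

/-- `h(l,u) = (K − e^u) − (K − e^l) Z(u−l) + λ ∫_0^{u−l} (K − e^{u−y}) W(y) dy`. -/
noncomputable def hfun (W : ℝ → ℝ) (lam Φ K l u : ℝ) : ℝ :=
  (K - Real.exp u) - (K - Real.exp l) * Zh W lam Φ (u - l)
    + lam * ∫ y in (0 : ℝ)..(u - l), (K - Real.exp (u - y)) * W y

lemma hasDerivAt_primitive {f : ℝ → ℝ} (hf : Continuous f) (x : ℝ) :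
    HasDerivAt (fun t => ∫ z in (0:ℝ)..t, f z) (f x) x :=
  intervalIntegral.integral_hasDerivAt_right (hf.intervalIntegrable _ _)
    (hf.stronglyMeasurableAtFilter _ _) hf.continuousAt

lemma hasDerivAt_Zh (W : ℝ → ℝ) (hWc : Continuous W) (lam Φ x : ℝ) :
    HasDerivAt (Zh W lam Φ) (Φ * Zh W lam Φ x + lam * W x) x := by
  have hI : HasDerivAt (fun t => ∫ z in (0:ℝ)..t, Real.exp (-Φ * z) * W z)
      (Real.exp (-Φ * x) * W x) x :=
    hasDerivAt_primitive (by continuity) x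
  have hE : HasDerivAt (fun t => Real.exp (Φ * t)) (Φ * Real.exp (Φ * x)) x := by
    simpa [mul_comm] using ((hasDerivAt_id x).const_mul Φ).exp
  have := hE.mul ((hI.const_mul lam).const_add 1)
  convert this using 1
  · rfl
  · rfl
  · rfl
  have : Real.exp (Φ * x) * Real.exp (-Φ * x) = 1 := by
    rw [← Real.exp_add]; ring_nf; exact Real.exp_zero
  unfold Zh
  linear_combination (-(lam * W x)) * this

/-- part of Lemma 5.8; put option, spectrally negative case.  With `W`
continuous, nonnegative and nondecreasing on `[0,∞)`, `Φ < 0`, `K > 0`, `λ > 0`, if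
`e^u (1 − Φ) < −KΦ` (i.e. `u < log(−KΦ/(1−Φ))`) then `h(l,u) > 0` for all `l < u`; in
particular there is no `l < u` with `h(l,u) = 0`. -/
theorem stmt14
    (W : ℝ → ℝ) (hWc : Continuous W)
    (hWnn : ∀ x : ℝ, 0 ≤ x → 0 ≤ W x)
    (hWmono : MonotoneOn W (Set.Ici 0))
    (lam Φ K u : ℝ) (hΦ : Φ < 0) (hK : 0 < K) (hlam : 0 < lam)
    (hu : Real.exp u * (1 - Φ) < -K * Φ) :
    (∀ l : ℝ, l < u → 0 < hfun W lam Φ K l u) ∧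
      ¬ ∃ l : ℝ, l < u ∧ hfun W lam Φ K l u = 0 := by
  set g : ℝ → ℝ := fun l => hfun W lam Φ K l u with hg_def
  -- derivative of g
  have hderiv : ∀ l : ℝ, HasDerivAt g
      ((Real.exp l + Φ * (K - Real.exp l)) * Zh W lam Φ (u - l)) l := by
    intro l
    have h1 : HasDerivAt (fun l : ℝ => u - l) (-1) l := (hasDerivAt_id l).const_sub u
    have hZ : HasDerivAt (fun l => Zh W lam Φ (u - l))
        ((Φ * Zh W lam Φ (u - l) + lam * W (u - l)) * (-1)) l :=
      (hasDerivAt_Zh W hWc lam Φ (u - l)).comp l h1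
    have hKE : HasDerivAt (fun l : ℝ => K - Real.exp l) (-Real.exp l) l := by
      simpa using (Real.hasDerivAt_exp l).const_sub K
    have hprod := hKE.mul hZ
    have hJ : HasDerivAt (fun l => ∫ y in (0:ℝ)..(u - l), (K - Real.exp (u - y)) * W y)
        (((K - Real.exp (u - (u - l))) * W (u - l)) * (-1)) l :=
      (hasDerivAt_primitive (by continuity) (u - l)).comp l h1
    have := ((hprod.const_sub (K - Real.exp u)).add (hJ.const_mul lam))
    convert this using 1
    · rfl
    · rfl
    · rfl
    have hul : u - (u - l) = l := by ring
    rw [hul]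
    ring
  have hZpos : ∀ l : ℝ, l ≤ u → 0 < Zh W lam Φ (u - l) := by
    intro l hl
    have hI : 0 ≤ ∫ z in (0:ℝ)..(u - l), Real.exp (-Φ * z) * W z := by
      apply intervalIntegral.integral_nonneg (by linarith)
      intro z hz
      exact mul_nonneg (Real.exp_pos _).le (hWnn z hz.1)
    unfold Zh
    positivity
  have hfac : ∀ l : ℝ, l ≤ u → Real.exp l + Φ * (K - Real.exp l) < 0 := by
    intro l hl
    have h1 : Real.exp l ≤ Real.exp u := Real.exp_le_exp.mpr hl
    have h2 : (0:ℝ) < 1 - Φ := by linarith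
    nlinarith
  have hanti : StrictAntiOn g (Set.Iic u) := by
    apply strictAntiOn_of_deriv_neg (convex_Iic u)
    · exact Continuous.continuousOn (by
        rw [continuous_iff_continuousAt]; exact fun l => (hderiv l).continuousAt)
    · intro l hl
      rw [interior_Iic] at hl
      rw [(hderiv l).deriv]
      exact mul_neg_of_neg_of_pos (hfac l hl.le) (hZpos l hl.le)
  have hgu : g u = 0 := by
    simp [hg_def, hfun, Zh]
  have main : ∀ l : ℝ, l < u → 0 < hfun W lam Φ K l u := by
    intro l hl
    have := hanti (Set.mem_Iic.mpr hl.le) (Set.mem_Iic.mpr le_rfl) hl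
    rw [hgu] at this
    exact this
  exact ⟨main, fun ⟨l, hl, heq⟩ => absurd heq (ne_of_gt (main l hl))⟩
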